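/- arXiv:1505.04335 — 5 statements merged into one kernel-verified Lean document; each statement's English description precedes it below -/
import Mathlib

section
/- For all real numbers a, b with a² + b² ≤ 1 and (a,b) ≠ (1,0), the function F(a,b) = (a((1-a)² + b²) - b²) / ((1-a)² + b²)² satisfies F(a,b) ≥ -1/4. -/
/-! With `D = (1 - a)² + b²` one has `D + 2a = 1 + a² + b²`, hence
`4 (a D - b²) + D² = (D + 2a)² - 4 (a² + b²) = (1 - a² - b²)² ≥ 0`,
which is the inequality after dividing by `4 D²`. -/

lemma neg_quarter_le_div_sq {x y : ℝ} (h : 0 ≤ 4 * x + y ^ 2) : -1 / 4 ≤ x / y ^ 2 := by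
  rcases eq_or_ne y 0 with rfl | hy
  · norm_num
  · rw [le_div_iff₀ (by positivity)]
    linarith

theorem stmt_0_general (a b : ℝ) :
    (a * ((1-a)^2 + b^2) - b^2) / ((1-a)^2 + b^2)^2 ≥ -1/4 := by
  apply neg_quarter_le_div_sq
  have key : 4 * (a * ((1-a)^2 + b^2) - b^2) + ((1-a)^2 + b^2)^2 = (1 - a^2 - b^2)^2 := by ring
  rw [key]
  positivity

theorem stmt_0 (a b : ℝ) (h : a^2 + b^2 ≤ 1) (hne : (a, b) ≠ (1, 0)) :
    (a * ((1-a)^2 + b^2) - b^2) / ((1-a)^2 + b^2)^2 ≥ -1/4 :=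
  stmt_0_general a b
end

section
/- Let x ∈ ℝ^{n+1} with |x| < 1 and let f(y) = |y - x| on ℝ^{n+1} \ {x}. Then for any y with |y| = 1 and any unit vector θ with ⟨y,θ⟩ = 0, the quantity (⟨∇²f(y)θ, θ⟩ - ⟨∇f(y), y⟩)/f(y) is greater than or equal to -1/4. -/
/-!
Write `d = y - x`, so that `f = ‖·‖ ∘ (· - x)`, `∇f(y) = d / ‖d‖` and
`∇²f(y)(θ, θ) = (‖θ‖² - ⟪d, θ⟫² / ‖d‖²) / ‖d‖`. Since `y, θ` are orthonormal, Bessel's inequality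
gives `⟪d, θ⟫² ≤ ‖d‖² - u²` with `u = ⟪d, y⟫`, so the quantity is at least
`(u² / ‖d‖² - u) / ‖d‖²`, which is `≥ -1/4` because `(u - ‖d‖² / 2)² ≥ 0`.
-/

open scoped RealInnerProductSpace

section

variable {E : Type*} [NormedAddCommGroup E] [InnerProductSpace ℝ E]

theorem hasStrictFDerivAt_norm {z : E} (hz : z ≠ 0) :
    HasStrictFDerivAt norm (‖z‖⁻¹ • innerSL ℝ z) z := by
  have h := (hasStrictFDerivAt_norm_sq z).sqrt (by positivity)
  simp only [Real.sqrt_sq (norm_nonneg _)] at h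
  convert h using 1
  ext w
  simp only [smul_apply, coe_innerSL_apply, smul_eq_mul, one_div, mul_inv_rev, nsmul_eq_mul,
    Nat.cast_ofNat]
  field_simp

theorem fderiv_fderiv_norm_apply {z : E} (hz : z ≠ 0) (u v : E) :
    fderiv ℝ (fderiv ℝ norm) z u v = (⟪u, v⟫ - ⟪z, u⟫ * ⟪z, v⟫ / ‖z‖ ^ 2) / ‖z‖ := by
  have hfderiv : fderiv ℝ norm =ᶠ[nhds z] fun w => ‖w‖⁻¹ • innerSL ℝ w := by
    filter_upwards [eventually_ne_nhds hz] with w hw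
    exact (hasStrictFDerivAt_norm hw).hasFDerivAt.fderiv
  have hinv : HasFDerivAt (fun w : E => ‖w‖⁻¹) (-(‖z‖ ^ 2)⁻¹ • ‖z‖⁻¹ • innerSL ℝ z) z :=
    (hasDerivAt_inv (norm_ne_zero_iff.2 hz)).comp_hasFDerivAt z
      (hasStrictFDerivAt_norm hz).hasFDerivAt
  have hF : HasFDerivAt (fun w : E => ‖w‖⁻¹ • innerSL ℝ w) _ z :=
    hinv.smul (innerSL ℝ).hasFDerivAt
  rw [hfderiv.fderiv_eq, hF.fderiv]
  simp only [neg_smul, add_apply, smul_apply, ContinuousLinearMap.smulRight_apply, neg_apply,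
    coe_innerSL_apply, smul_eq_mul]
  rw [innerSL_apply_apply]
  field_simp
  ring

theorem sq_inner_add_sq_inner_le_norm_sq {e₁ e₂ : E} (h₁ : ‖e₁‖ = 1) (h₂ : ‖e₂‖ = 1)
    (h₁₂ : ⟪e₁, e₂⟫ = 0) (v : E) : ⟪v, e₁⟫ ^ 2 + ⟪v, e₂⟫ ^ 2 ≤ ‖v‖ ^ 2 := by
  have hon : Orthonormal ℝ ![e₁, e₂] := by
    rw [orthonormal_iff_ite]
    intro i j
    fin_cases i <;> fin_cases j <;> simp [h₁, h₂, h₁₂, real_inner_comm e₁ e₂]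
  simpa [Fin.sum_univ_two, real_inner_comm v] using hon.sum_inner_products_le v (s := Finset.univ)

end

theorem neg_quarter_le_of_sq_add_sq_le {R c u : ℝ} (hR : 0 < R) (h : c ^ 2 + u ^ 2 ≤ R) :
    -1/4 ≤ (1 - c ^ 2 / R - u) / R := by
  have hc : c ^ 2 / R ≤ 1 - u ^ 2 / R := by
    rw [div_le_iff₀ hR, sub_mul, div_mul_cancel₀ _ hR.ne']
    linarith
  have hsq : u ^ 2 / R - u + R / 4 = (u - R / 2) ^ 2 / R := by
    field_simp
    ring
  rw [le_div_iff₀ hR]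
  linarith [div_nonneg (sq_nonneg (u - R / 2)) hR.le]

theorem stmt_5_general (n : ℕ) (x : EuclideanSpace ℝ (Fin (n+1)))
    (f : EuclideanSpace ℝ (Fin (n+1)) → ℝ) (hf : ∀ z, f z = ‖z - x‖)
    (y θ : EuclideanSpace ℝ (Fin (n+1)))
    (hy : ‖y‖ = 1) (hθ : ‖θ‖ = 1) (hyθ : ⟪y, θ⟫ = 0) :
    (iteratedFDeriv ℝ 2 f y ![θ, θ] - fderiv ℝ f y y) / f y ≥ -1/4 := by
  obtain rfl : f = fun z => ‖z - x‖ := funext hf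
  rcases eq_or_ne (y - x) 0 with hyx | hyx
  -- at `y = x` the quotient is `0` by the convention `a / 0 = 0`
  · norm_num [hyx]
  have hbessel := sq_inner_add_sq_inner_le_norm_sq hθ hy (real_inner_comm y θ ▸ hyθ) (y - x)
  rw [iteratedFDeriv_comp_sub, iteratedFDeriv_two_apply, fderiv_comp_sub,
    fderiv_fderiv_norm_apply hyx, (hasStrictFDerivAt_norm hyx).hasFDerivAt.fderiv]
  simp only [Matrix.cons_val_zero, Matrix.cons_val_one, FunLike.coe_smul, Pi.smul_apply,
    smul_eq_mul, real_inner_self_eq_norm_sq, hθ]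
  rw [innerSL_apply_apply]
  convert neg_quarter_le_of_sq_add_sq_le (by positivity) hbessel using 1
  field_simp

theorem stmt_5 (n : ℕ) (x : EuclideanSpace ℝ (Fin (n+1))) (hx : ‖x‖ < 1)
    (f : EuclideanSpace ℝ (Fin (n+1)) → ℝ) (hf : ∀ z, f z = ‖z - x‖)
    (y θ : EuclideanSpace ℝ (Fin (n+1)))
    (hy : ‖y‖ = 1) (hθ : ‖θ‖ = 1) (hyθ : ⟪y, θ⟫ = 0) :
    (iteratedFDeriv ℝ 2 f y ![θ, θ] - fderiv ℝ f y y) / f y ≥ -1/4 :=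
  stmt_5_general n x f hf y θ hy hθ hyθ
end

section
/- For x ∈ ℝ^{n+1} with |x| < 1, y ∈ ℝ^{n+1} with |y| = 1, and a unit vector θ with ⟨y,θ⟩ = 0, the inequality (1/|y-x|²)·(⟨x,y⟩ - ⟨x,θ⟩²/|y-x|²) ≥ -1/4 holds. -/
/-!
With `D = ‖y - x‖² = 1 - 2⟪x, y⟫ + ‖x‖²`, `a = ⟪x, y⟫` and `t = ⟪x, θ⟫`, the claim is
`D² + 4aD - 4t² ≥ 0`. Bessel's inequality for the orthonormal pair `y, θ` gives `t² ≤ ‖x‖² - a²`,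
so the left side is at least `(D + 2a)² - 4‖x‖² = (1 - ‖x‖²)² ≥ 0`.
-/

open scoped RealInnerProductSpace

theorem sq_inner_add_sq_inner_le_norm_sq_s6 {E : Type*} [NormedAddCommGroup E]
    [InnerProductSpace ℝ E] {u v : E} (hu : ‖u‖ = 1) (hv : ‖v‖ = 1) (huv : ⟪u, v⟫ = 0) (x : E) :
    ⟪x, u⟫ ^ 2 + ⟪x, v⟫ ^ 2 ≤ ‖x‖ ^ 2 := by
  have hon : Orthonormal ℝ ![u, v] := by
    rw [orthonormal_iff_ite]
    intro i j
    fin_cases i <;> fin_cases j <;> simp [hu, hv, huv, real_inner_comm u v]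
  simpa [Fin.sum_univ_two, real_inner_comm x] using hon.sum_inner_products_le (s := Finset.univ) x

theorem neg_quarter_le_one_div_mul_sub_sq_div {D a t r : ℝ} (hD : D = 1 - 2 * a + r ^ 2)
    (hat : a ^ 2 + t ^ 2 ≤ r ^ 2) : -1 / 4 ≤ 1 / D * (a - t ^ 2 / D) := by
  rcases eq_or_ne D 0 with rfl | hD0
  · norm_num -- junk value: `1 / 0 = 0`
  have key : 0 ≤ D ^ 2 + 4 * a * D - 4 * t ^ 2 := by nlinarith [sq_nonneg (1 - r ^ 2)]
  have hquot : 1 / D * (a - t ^ 2 / D) + 1 / 4 = (D ^ 2 + 4 * a * D - 4 * t ^ 2) / (4 * D ^ 2) := by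
    field_simp
    ring
  have : 0 ≤ (D ^ 2 + 4 * a * D - 4 * t ^ 2) / (4 * D ^ 2) := by positivity
  linarith

theorem stmt_6_general (n : ℕ) (x y θ : EuclideanSpace ℝ (Fin (n+1)))
    (hy : ‖y‖ = 1) (hθ : ‖θ‖ = 1) (hyθ : ⟪y, θ⟫ = 0) :
    (1 / ‖y - x‖^2) * (⟪x, y⟫ - ⟪x, θ⟫^2 / ‖y - x‖^2) ≥ -1/4 := by
  refine neg_quarter_le_one_div_mul_sub_sq_div (r := ‖x‖) ?_
    (sq_inner_add_sq_inner_le_norm_sq_s6 hy hθ hyθ x)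
  rw [norm_sub_sq_real, hy, real_inner_comm]
  ring

theorem stmt_6 (n : ℕ) (x y θ : EuclideanSpace ℝ (Fin (n+1)))
    (hx : ‖x‖ < 1) (hy : ‖y‖ = 1) (hθ : ‖θ‖ = 1) (hyθ : ⟪y, θ⟫ = 0) :
    (1 / ‖y - x‖^2) * (⟪x, y⟫ - ⟪x, θ⟫^2 / ‖y - x‖^2) ≥ -1/4 :=
  stmt_6_general n x y θ hy hθ hyθ
end

section
/- For p ≥ 1, the function F_p(a,b) = (a((1-a)² + b²) + (p-2)b²)/((1-a)² + b²)² satisfies F_p(a,b) ≥ -1/4 for all (a,b) in the closed unit disk with (a,b) ≠ (1,0), and the value -1/4 is attained at (a,b) = (-1,0). -/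
/-!
With `D = (1 - a)² + b²` and `r = a² + b²` one has `D + 2a = 1 + r`, so completing the square gives
`4 (a D + (p - 2) b²) + D² = (1 - r)² + 4 (p - 1) b²`, which is nonnegative for `p ≥ 1`.
Dividing by `4 D²` yields `F_p ≥ -1/4` wherever `D > 0`, with equality at `(-1, 0)`.
-/

noncomputable def Fp (p a b : ℝ) : ℝ :=
  (a * ((1 - a) ^ 2 + b ^ 2) + (p - 2) * b ^ 2) / ((1 - a) ^ 2 + b ^ 2) ^ 2

lemma one_sub_sq_add_sq_pos {a b : ℝ} (hne : (a, b) ≠ (1, 0)) : 0 < (1 - a) ^ 2 + b ^ 2 := by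
  refine lt_of_le_of_ne (by positivity) fun h0 => hne ?_
  obtain ⟨ha, hb⟩ := (add_eq_zero_iff_of_nonneg (sq_nonneg _) (sq_nonneg _)).1 h0.symm
  rw [Prod.mk.injEq]
  exact ⟨(sub_eq_zero.1 ((pow_eq_zero_iff two_ne_zero).1 ha)).symm,
    (pow_eq_zero_iff two_ne_zero).1 hb⟩

lemma four_mul_numerator_add_sq_denominator (p a b : ℝ) :
    4 * (a * ((1 - a) ^ 2 + b ^ 2) + (p - 2) * b ^ 2) + ((1 - a) ^ 2 + b ^ 2) ^ 2
      = (1 - (a ^ 2 + b ^ 2)) ^ 2 + 4 * (p - 1) * b ^ 2 := by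
  ring

lemma neg_one_div_four_le_Fp {p : ℝ} (hp : 1 ≤ p) {a b : ℝ} (hne : (a, b) ≠ (1, 0)) :
    -1 / 4 ≤ Fp p a b := by
  have hD := one_sub_sq_add_sq_pos hne
  have hsum : 0 ≤ (1 - (a ^ 2 + b ^ 2)) ^ 2 + 4 * (p - 1) * b ^ 2 := by
    have : 0 ≤ p - 1 := sub_nonneg.2 hp
    positivity
  rw [Fp, le_div_iff₀ (by positivity)]
  linarith [four_mul_numerator_add_sq_denominator p a b]

lemma Fp_neg_one_zero (p : ℝ) : Fp p (-1) 0 = -1 / 4 := by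
  norm_num [Fp]

theorem stmt_8 (p : ℝ) (hp : 1 ≤ p) :
    (∀ a b : ℝ, a^2 + b^2 ≤ 1 → (a, b) ≠ (1, 0) →
      (a * ((1-a)^2 + b^2) + (p-2) * b^2) / ((1-a)^2 + b^2)^2 ≥ -1/4) ∧
    ((-1 : ℝ) * ((1-(-1:ℝ))^2 + (0:ℝ)^2) + (p-2) * (0:ℝ)^2) / ((1-(-1:ℝ))^2 + (0:ℝ)^2)^2
      = -1/4 :=
  ⟨fun _ _ _ hne => neg_one_div_four_le_Fp hp hne, Fp_neg_one_zero p⟩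
end

section
/- For x ∈ ℝ^{n+1} with |x| < 1 and any p ≥ 1, the function f(y) = |y - x|^p satisfies, for all unit y with ⟨y,θ⟩ = 0 and |θ| = 1, (⟨∇²f(y)θ,θ⟩ - ⟨∇f(y),y⟩)/f(y) ≥ -p/4. -/
open scoped RealInnerProductSpace

set_option maxHeartbeats 1000000 in
theorem stmt_11 (n : ℕ) (x : EuclideanSpace ℝ (Fin (n+1))) (hx : ‖x‖ < 1)
    (p : ℝ) (hp : 1 ≤ p)
    (f : EuclideanSpace ℝ (Fin (n+1)) → ℝ) (hf : ∀ z, f z = ‖z - x‖ ^ p)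
    (y θ : EuclideanSpace ℝ (Fin (n+1)))
    (hy : ‖y‖ = 1) (hθ : ‖θ‖ = 1) (hyθ : ⟪y, θ⟫ = 0) :
    (iteratedFDeriv ℝ 2 f y ![θ, θ] - fderiv ℝ f y y) / f y ≥ -p/4 := by
  have hp0 : (0:ℝ) < p := lt_of_lt_of_le one_pos hp
  have hyx : y ≠ x := by
    intro h; rw [h] at hy; rw [hy] at hx; exact lt_irrefl 1 hx
  have hg : ∀ z : EuclideanSpace ℝ (Fin (n+1)),
      HasFDerivAt (fun w => ‖w - x‖^2) (2 • innerSL ℝ (z - x)) z := by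
    intro z
    simpa using ((hasFDerivAt_id z).sub_const x).norm_sq
  have hfeq : f = fun z => (‖z - x‖^2 : ℝ) ^ (p/2) := by
    funext z
    rw [hf z, ← Real.rpow_natCast ‖z - x‖ 2, ← Real.rpow_mul (norm_nonneg _)]
    congr 1; ring
  set F1 : EuclideanSpace ℝ (Fin (n+1)) → (EuclideanSpace ℝ (Fin (n+1)) →L[ℝ] ℝ) :=
    fun z => (p * ((‖z - x‖^2 : ℝ)) ^ (p/2 - 1)) • innerSL ℝ (z - x) with hF1
  have hne : ∀ z : EuclideanSpace ℝ (Fin (n+1)), z ≠ x → (‖z - x‖^2 : ℝ) ≠ 0 :=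
    fun z hz => pow_ne_zero 2 (norm_ne_zero_iff.mpr (sub_ne_zero.mpr hz))
  have hder : ∀ z : EuclideanSpace ℝ (Fin (n+1)), z ≠ x → HasFDerivAt f (F1 z) z := by
    intro z hz
    have := ((hg z).rpow_const (p := p/2) (Or.inl (hne z hz)))
    rw [hfeq]
    refine this.congr_fderiv ?_
    ext v
    simp [hF1, smul_smul]
    ring
  have hEv : fderiv ℝ f =ᶠ[nhds y] F1 := by
    filter_upwards [isOpen_compl_singleton.mem_nhds hyx] with z hz
    exact (hder z hz).fderiv
  have hGne : (‖y - x‖^2 : ℝ) ≠ 0 := hne y hyx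
  have ha : HasFDerivAt (fun z => p * ((‖z - x‖^2 : ℝ)) ^ (p/2 - 1))
      (p • ((p/2 - 1) * (‖y - x‖^2 : ℝ) ^ (p/2 - 1 - 1)) • (2 • innerSL ℝ (y - x))) y :=
    ((hg y).rpow_const (Or.inl hGne)).const_mul p
  let M : EuclideanSpace ℝ (Fin (n+1)) →L[ℝ] EuclideanSpace ℝ (Fin (n+1)) →L[ℝ] ℝ :=
    innerSL ℝ
  have hm : HasFDerivAt (fun z : EuclideanSpace ℝ (Fin (n+1)) => innerSL ℝ (z - x))
      M y := by
    have h : (fun z : EuclideanSpace ℝ (Fin (n+1)) => innerSL ℝ (z - x))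
        = fun z => M z
          - innerSL ℝ x := by
      funext z; simp; rfl
    rw [h]
    exact (M.hasFDerivAt).sub_const _
  have hD : HasFDerivAt F1
      ((p * ((‖y - x‖^2 : ℝ)) ^ (p/2 - 1)) • M +
        (p • ((p/2 - 1) * (‖y - x‖^2 : ℝ) ^ (p/2 - 1 - 1)) •
          (2 • innerSL ℝ (y - x))).smulRight (innerSL ℝ (y - x))) y :=
    ha.smul hm
  have h2 : iteratedFDeriv ℝ 2 f y ![θ, θ]
      = (p * ((‖y - x‖^2 : ℝ)) ^ (p/2 - 1)) * ⟪θ, θ⟫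
        + (p * ((p/2 - 1) * (‖y - x‖^2 : ℝ) ^ (p/2 - 1 - 1) * (2 * ⟪y - x, θ⟫)))
          * ⟪y - x, θ⟫ := by
    have hM : ∀ v w : EuclideanSpace ℝ (Fin (n+1)), M v w = ⟪v, w⟫ := fun v w => rfl
    rw [iteratedFDeriv_two_apply, hEv.fderiv_eq, hD.fderiv]
    simp only [ContinuousLinearMap.add_apply, ContinuousLinearMap.smul_apply,
      ContinuousLinearMap.smulRight_apply, innerSL_apply_apply, smul_eq_mul, hM,
      Matrix.cons_val_zero, Matrix.cons_val_one, Matrix.head_cons, nsmul_eq_mul,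
      Nat.cast_ofNat]
  have h1 : fderiv ℝ f y y = p * ((‖y - x‖^2 : ℝ)) ^ (p/2 - 1) * ⟪y - x, y⟫ := by
    rw [(hder y hyx).fderiv]
    simp only [hF1, ContinuousLinearMap.smul_apply, innerSL_apply_apply, smul_eq_mul]
  set q : ℝ := ‖x‖^2 with hqdef
  set s : ℝ := ⟪x, y⟫ with hsdef
  set t : ℝ := ⟪x, θ⟫ with htdef
  set G : ℝ := ‖y - x‖^2 with hGdef
  have hG : 0 < G := lt_of_le_of_ne (by positivity) (Ne.symm hGne)
  have hyy : ⟪y, y⟫ = (1:ℝ) := by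
    rw [real_inner_self_eq_norm_sq, hy]; norm_num
  have hθθ : ⟪θ, θ⟫ = (1:ℝ) := by
    rw [real_inner_self_eq_norm_sq, hθ]; norm_num
  have hθy : ⟪θ, y⟫ = 0 := by rw [real_inner_comm]; exact hyθ
  have hyx' : ⟪y, x⟫ = s := (real_inner_comm y x).symm
  have hθx : ⟪θ, x⟫ = t := (real_inner_comm θ x).symm
  have hxx : ⟪x, x⟫ = q := real_inner_self_eq_norm_sq x
  have hGval : G = 1 - 2*s + q := by
    rw [hGdef, ← real_inner_self_eq_norm_sq]
    simp only [inner_sub_left, inner_sub_right, hyy, hyx', hxx, ← hsdef]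
    ring
  have hbes : s^2 + t^2 ≤ q := by
    have h0 := real_inner_self_nonneg (x := x - s • y - t • θ)
    simp only [inner_sub_left, inner_sub_right, real_inner_smul_left,
      real_inner_smul_right, hyy, hθθ, hyθ, hθy, hyx', hθx, hxx,
      ← hsdef, ← htdef] at h0
    nlinarith [h0]
  have hq1 : q < 1 := by rw [hqdef]; nlinarith [norm_nonneg x]
  have key : 0 ≤ 4*s*G + 4*(p-2)*t^2 + G^2 := by
    rcases le_or_gt 2 p with h2p | h2p
    · nlinarith [mul_nonneg hG.le (sq_nonneg (1+s)),
        mul_nonneg (by linarith : (0:ℝ) ≤ p-2) (sq_nonneg t),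
        mul_nonneg hG.le (by nlinarith : (0:ℝ) ≤ q - s^2)]
    · nlinarith [sq_nonneg (1-q), sq_nonneg t,
        mul_nonneg (by linarith : (0:ℝ) ≤ 2-p) (sq_nonneg t)]
  have hsubθ : ⟪y - x, θ⟫ = -t := by
    simp only [inner_sub_left, hyθ, ← htdef]; ring
  have hsuby : ⟪y - x, y⟫ = 1 - s := by
    simp only [inner_sub_left, hyy, hyx', ← hsdef]
  have hfy : f y = G ^ (p/2) := by rw [hfeq]
  rw [h2, h1, hfy, hθθ, hsubθ, hsuby]
  have hA : 0 < G ^ (p/2) := Real.rpow_pos_of_pos hG _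
  have e1 : G ^ (p/2 - 1) = G ^ (p/2) / G := by
    rw [Real.rpow_sub hG, Real.rpow_one]
  have e2 : G ^ (p/2 - 1 - 1) = G ^ (p/2) / G / G := by
    rw [Real.rpow_sub hG, Real.rpow_sub hG, Real.rpow_one]
  rw [e1, e2, ge_iff_le, le_div_iff₀ hA]
  have hGne' : G ≠ 0 := ne_of_gt hG
  have hkey2 : 0 ≤ p * G ^ (p/2) * (4*s*G + 4*(p-2)*t^2 + G^2) :=
    mul_nonneg (mul_nonneg hp0.le hA.le) key
  have hid : p * (G ^ (p/2) / G) * 1 + p * ((p/2 - 1) * (G ^ (p/2) / G / G) * (2 * -t)) * -t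
        - p * (G ^ (p/2) / G) * (1 - s) - (-p/4 * G ^ (p/2))
      = (p * G ^ (p/2) / (4 * G^2)) * (4*s*G + 4*(p-2)*t^2 + G^2) := by
    field_simp
    ring
  have h4 : 0 ≤ (p * G ^ (p/2) / (4 * G^2)) * (4*s*G + 4*(p-2)*t^2 + G^2) :=
    mul_nonneg (div_nonneg (mul_nonneg hp0.le hA.le) (by positivity)) key
  linarith [hid, h4]
end
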